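/- arXiv:2309.15417 — 2 statements merged into one kernel-verified Lean document; each statement's English description precedes it below -/
import Mathlib

section
/- Let a, b, c, d be points in Euclidean 3-space. If the axis-aligned bounding box spanned by a and b is disjoint from the axis-aligned bounding box spanned by c and d, then for every t in [0,1] the linear interpolants satisfy (1−t)•a + t•b ≠ (1−t)•c + t•d; i.e., two particles moving linearly whose endpoint bounding boxes do not overlap never collide during the time interval. -/
/-- The axis-aligned bounding box spanned by two points of Euclidean 3-space. -/
def boundingBox (x y : EuclideanSpace ℝ (Fin 3)) : Set (EuclideanSpace ℝ (Fin 3)) :=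
  {z | ∀ i : Fin 3, min (x i) (y i) ≤ z i ∧ z i ≤ max (x i) (y i)}

lemma interp_mem_boundingBox (x y : EuclideanSpace ℝ (Fin 3)) {t : ℝ}
    (ht : t ∈ Set.Icc (0 : ℝ) 1) : (1 - t) • x + t • y ∈ boundingBox x y := by
  obtain ⟨h0, h1⟩ := ht
  intro i
  have hi : ((1 - t) • x + t • y) i = (1 - t) * x i + t * y i := rfl
  rw [hi]
  constructor
  · calc min (x i) (y i) = (1 - t) * min (x i) (y i) + t * min (x i) (y i) := by ring
      _ ≤ (1 - t) * x i + t * y i := by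
          gcongr <;> [exact min_le_left _ _; exact min_le_right _ _]
  · calc (1 - t) * x i + t * y i ≤ (1 - t) * max (x i) (y i) + t * max (x i) (y i) := by
          gcongr <;> [exact le_max_left _ _; exact le_max_right _ _]
      _ = max (x i) (y i) := by ring

/-- If the axis-aligned bounding boxes spanned by the endpoint positions of two linearly
moving particles are disjoint, the particles never collide during the time interval. -/
theorem disjoint_bounding_boxes_no_collision
    (a b c d : EuclideanSpace ℝ (Fin 3))
    (hdisj : Disjoint (boundingBox a b) (boundingBox c d)) :
    ∀ t ∈ Set.Icc (0 : ℝ) 1, (1 - t) • a + t • b ≠ (1 - t) • c + t • d := by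
  intro t ht heq
  exact Set.disjoint_left.mp hdisj (interp_mem_boundingBox a b ht)
    (heq ▸ interp_mem_boundingBox c d ht)
end

section
/- Let E be a real inner product space, m₁, m₂ > 0, v₁, v₂ ∈ E, and n ∈ E with ‖n‖ = 1. With λ = max 0 (−⟪v₁ − v₂, n⟫ / (m₁⁻¹ + m₂⁻¹)), v₁' = v₁ + (λ * m₁⁻¹) • n and v₂' = v₂ − (λ * m₂⁻¹) • n, the total kinetic energy does not increase: (m₁/2) * ‖v₁'‖² + (m₂/2) * ‖v₂'‖² ≤ (m₁/2) * ‖v₁‖² + (m₂/2) * ‖v₂‖². -/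
open scoped RealInnerProductSpace

/-- The sequential-impulse update along a unit contact normal does not increase the
total kinetic energy of the two colliding particles. -/
theorem sequential_impulse_kinetic_energy_nonincreasing
    {E : Type*} [NormedAddCommGroup E] [InnerProductSpace ℝ E]
    (m₁ m₂ : ℝ) (hm₁ : 0 < m₁) (hm₂ : 0 < m₂)
    (v₁ v₂ n : E) (hn : ‖n‖ = 1)
    (lam : ℝ) (hlam : lam = max 0 (-⟪v₁ - v₂, n⟫ / (m₁⁻¹ + m₂⁻¹)))
    (v₁' v₂' : E)
    (hv₁' : v₁' = v₁ + (lam * m₁⁻¹) • n)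
    (hv₂' : v₂' = v₂ - (lam * m₂⁻¹) • n) :
    (m₁ / 2) * ‖v₁'‖ ^ 2 + (m₂ / 2) * ‖v₂'‖ ^ 2 ≤
      (m₁ / 2) * ‖v₁‖ ^ 2 + (m₂ / 2) * ‖v₂‖ ^ 2 := by
  have hμ : (0:ℝ) < m₁⁻¹ + m₂⁻¹ := by positivity
  have hs : ⟪v₁ - v₂, n⟫ = ⟪v₁, n⟫ - ⟪v₂, n⟫ := inner_sub_left v₁ v₂ n
  have h1 : ‖v₁'‖ ^ 2 = ‖v₁‖ ^ 2 + 2 * (lam * m₁⁻¹) * ⟪v₁, n⟫ + (lam * m₁⁻¹) ^ 2 := by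
    rw [hv₁', @norm_add_sq_real, real_inner_smul_right, norm_smul, hn]
    simp [mul_pow, abs_mul_abs_self]
    ring
  have h2 : ‖v₂'‖ ^ 2 = ‖v₂‖ ^ 2 - 2 * (lam * m₂⁻¹) * ⟪v₂, n⟫ + (lam * m₂⁻¹) ^ 2 := by
    rw [hv₂', @norm_sub_sq_real, real_inner_smul_right, norm_smul, hn]
    simp [mul_pow, abs_mul_abs_self]
    ring
  have key : lam * (⟪v₁, n⟫ - ⟪v₂, n⟫) + lam ^ 2 / 2 * (m₁⁻¹ + m₂⁻¹) ≤ 0 := by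
    rcases le_or_gt 0 (⟪v₁ - v₂, n⟫) with h | h
    · have : lam = 0 := by
        rw [hlam, max_eq_left]
        exact div_nonpos_of_nonpos_of_nonneg (by linarith) hμ.le
      simp [this]
    · have hl : lam = -⟪v₁ - v₂, n⟫ / (m₁⁻¹ + m₂⁻¹) := by
        rw [hlam, max_eq_right]
        exact div_nonneg (by linarith) hμ.le
      rw [← hs, hl]
      have heq : (-⟪v₁ - v₂, n⟫ / (m₁⁻¹ + m₂⁻¹)) * ⟪v₁ - v₂, n⟫
          + (-⟪v₁ - v₂, n⟫ / (m₁⁻¹ + m₂⁻¹)) ^ 2 / 2 * (m₁⁻¹ + m₂⁻¹)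
          = -(⟪v₁ - v₂, n⟫ ^ 2) / (2 * (m₁⁻¹ + m₂⁻¹)) := by
        field_simp
        ring
      rw [heq, neg_div]
      have : 0 ≤ ⟪v₁ - v₂, n⟫ ^ 2 / (2 * (m₁⁻¹ + m₂⁻¹)) := by positivity
      linarith
  rw [h1, h2]
  have e1 : m₁ ≠ 0 := hm₁.ne'
  have e2 : m₂ ≠ 0 := hm₂.ne'
  have expand : (m₁ / 2) * (‖v₁‖ ^ 2 + 2 * (lam * m₁⁻¹) * ⟪v₁, n⟫ + (lam * m₁⁻¹) ^ 2)
      + (m₂ / 2) * (‖v₂‖ ^ 2 - 2 * (lam * m₂⁻¹) * ⟪v₂, n⟫ + (lam * m₂⁻¹) ^ 2)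
      = (m₁ / 2) * ‖v₁‖ ^ 2 + (m₂ / 2) * ‖v₂‖ ^ 2
        + (lam * (⟪v₁, n⟫ - ⟪v₂, n⟫) + lam ^ 2 / 2 * (m₁⁻¹ + m₂⁻¹)) := by
    field_simp
    ring
  rw [expand]
  linarith [key]
end
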